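/- Let ρ be a real number with 0 < ρ < 1, let α : ℕ → ℝ satisfy 0 < α t ≤ 1 for all t ≥ 1, let c : ℕ → ℝ satisfy 0 ≤ c 0 ≤ 1 and c (t+1) = c t + α (t+1)(1 − c t), and let u : ℕ → ℝ satisfy u 0 ≥ 0 and u (t+1) = ρ(1 − c (t+1)) u t. Define the order-gap sequence Ω (t+1) = ρ · α (t+1) · (1 − c t) · u t. Then Ω (t+1) ≤ ρ^{t+1} · (1 − c 0) · u 0 for every t, and Ω t tends to 0 as t → ∞. -/

import Mathlib

/-!
The expansion step multiplies the remaining uncertainty `1 - c` by `1 - α ∈ [0, 1]`, so `c`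
stays in `[0, 1]` and increases. Hence the residual `(1 - c t) * u t` contracts by the factor `ρ`
at every step, because `(1 - c (t+1))² ≤ 1 - c t`, and the order-gap `Ω (t+1)` is `ρ α (t+1)`
times the residual at time `t`.
-/

section Expansion

variable {α c : ℕ → ℝ}

theorem one_sub_expand_succ (hcrec : ∀ t, c (t + 1) = c t + α (t + 1) * (1 - c t)) (t : ℕ) :
    1 - c (t + 1) = (1 - α (t + 1)) * (1 - c t) := by
  rw [hcrec t]; ring

theorem expand_mem_Icc (hα : ∀ t, α (t + 1) ∈ Set.Icc 0 1)
    (hcrec : ∀ t, c (t + 1) = c t + α (t + 1) * (1 - c t)) (h0 : c 0 ∈ Set.Icc 0 1) (t : ℕ) :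
    c t ∈ Set.Icc 0 1 := by
  induction t with
  | zero => exact h0
  | succ n ih =>
    obtain ⟨hα0, hα1⟩ := hα n
    obtain ⟨hc0, hc1⟩ := ih
    have h := one_sub_expand_succ hcrec n
    constructor <;> nlinarith

theorem expand_le_succ (hα : ∀ t, α (t + 1) ∈ Set.Icc 0 1)
    (hcrec : ∀ t, c (t + 1) = c t + α (t + 1) * (1 - c t)) (h0 : c 0 ∈ Set.Icc 0 1) (t : ℕ) :
    c t ≤ c (t + 1) := by
  have := (hα t).1
  have := (expand_mem_Icc hα hcrec h0 t).2
  rw [hcrec t]; nlinarith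

end Expansion

section Consolidation

variable {ρ : ℝ} {c u : ℕ → ℝ}

theorem consolidate_nonneg (hρ : 0 ≤ ρ) (hurec : ∀ t, u (t + 1) = ρ * (1 - c (t + 1)) * u t)
    (hc : ∀ t, c t ≤ 1) (hu0 : 0 ≤ u 0) (t : ℕ) : 0 ≤ u t := by
  induction t with
  | zero => exact hu0
  | succ n ih =>
    have : 0 ≤ 1 - c (n + 1) := sub_nonneg.mpr (hc (n + 1))
    rw [hurec n]; positivity

theorem residual_succ_le (hρ : 0 ≤ ρ) (hurec : ∀ t, u (t + 1) = ρ * (1 - c (t + 1)) * u t)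
    {t : ℕ} (hc : c (t + 1) ∈ Set.Icc 0 1) (hmono : c t ≤ c (t + 1)) (hu : 0 ≤ u t) :
    (1 - c (t + 1)) * u (t + 1) ≤ ρ * ((1 - c t) * u t) := by
  have hsq : (1 - c (t + 1)) ^ 2 ≤ 1 - c t := by nlinarith [hc.1, hc.2]
  calc (1 - c (t + 1)) * u (t + 1) = ρ * ((1 - c (t + 1)) ^ 2 * u t) := by rw [hurec t]; ring
    _ ≤ ρ * ((1 - c t) * u t) := by gcongr

theorem residual_le_geom (hρ : 0 ≤ ρ) (hurec : ∀ t, u (t + 1) = ρ * (1 - c (t + 1)) * u t)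
    (hc : ∀ t, c t ∈ Set.Icc 0 1) (hmono : ∀ t, c t ≤ c (t + 1)) (hu0 : 0 ≤ u 0) (t : ℕ) :
    (1 - c t) * u t ≤ ρ ^ t * ((1 - c 0) * u 0) :=
  le_geom (u := fun s ↦ (1 - c s) * u s) hρ t fun k _ ↦
    residual_succ_le hρ hurec (hc (k + 1)) (hmono k)
      (consolidate_nonneg hρ hurec (fun s ↦ (hc s).2) hu0 k)

end Consolidation

open Filter

/-- Geometric decay of the order-gap along the coupled dynamics of the paper's closed-form
example: with `Ω (t+1) = ρ * α (t+1) * (1 − c t) * u t`, the order-gap satisfies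
`Ω (t+1) ≤ ρ^(t+1) * (1 − c 0) * u 0` and tends to `0`. -/
theorem order_gap_decay
    (ρ : ℝ) (hρ0 : 0 < ρ) (hρ1 : ρ < 1)
    (α : ℕ → ℝ) (hα : ∀ t, 1 ≤ t → 0 < α t ∧ α t ≤ 1)
    (c : ℕ → ℝ) (hc0 : 0 ≤ c 0) (hc0' : c 0 ≤ 1)
    (hcrec : ∀ t, c (t + 1) = c t + α (t + 1) * (1 - c t))
    (u : ℕ → ℝ) (hu0 : 0 ≤ u 0)
    (hurec : ∀ t, u (t + 1) = ρ * (1 - c (t + 1)) * u t)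
    (Ω : ℕ → ℝ)
    (hΩ : ∀ t, Ω (t + 1) = ρ * α (t + 1) * (1 - c t) * u t) :
    (∀ t, Ω (t + 1) ≤ ρ ^ (t + 1) * (1 - c 0) * u 0) ∧
      Tendsto Ω atTop (nhds 0) := by
  have hα' (t : ℕ) : α (t + 1) ∈ Set.Icc 0 1 :=
    have h := hα (t + 1) t.succ_pos
    ⟨h.1.le, h.2⟩
  have hc := expand_mem_Icc hα' hcrec ⟨hc0, hc0'⟩
  have hu := consolidate_nonneg hρ0.le hurec (fun s ↦ (hc s).2) hu0
  have hresidual := residual_le_geom hρ0.le hurec hc (expand_le_succ hα' hcrec ⟨hc0, hc0'⟩) hu0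
  have hresidual_nonneg (t : ℕ) : 0 ≤ (1 - c t) * u t :=
    mul_nonneg (sub_nonneg.mpr (hc t).2) (hu t)
  have hΩ_eq (t : ℕ) : Ω (t + 1) = ρ * α (t + 1) * ((1 - c t) * u t) := by rw [hΩ t]; ring
  have hΩ_nonneg (t : ℕ) : 0 ≤ Ω (t + 1) := by
    rw [hΩ_eq t]
    exact mul_nonneg (mul_nonneg hρ0.le (hα' t).1) (hresidual_nonneg t)
  have hΩ_le (t : ℕ) : Ω (t + 1) ≤ ρ ^ (t + 1) * (1 - c 0) * u 0 :=
    calc Ω (t + 1) ≤ ρ * 1 * (ρ ^ t * ((1 - c 0) * u 0)) := by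
          rw [hΩ_eq t]
          exact mul_le_mul (mul_le_mul_of_nonneg_left (hα' t).2 hρ0.le) (hresidual t)
            (hresidual_nonneg t) (by simpa using hρ0.le)
      _ = ρ ^ (t + 1) * (1 - c 0) * u 0 := by ring
  have hgeom : Tendsto (fun t : ℕ ↦ ρ ^ (t + 1) * (1 - c 0) * u 0) atTop (nhds 0) := by
    simpa using (((tendsto_pow_atTop_nhds_zero_of_lt_one hρ0.le hρ1).comp
      (tendsto_add_atTop_nat 1)).mul_const (1 - c 0)).mul_const (u 0)
  exact ⟨hΩ_le, (tendsto_add_atTop_iff_nat 1).mp (squeeze_zero hΩ_nonneg hΩ_le hgeom)⟩
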